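/- For any pure state |ψ⟩ in dimension d and any complete projective measurement Π, the trace distance ½‖|ψ⟩⟨ψ| − Π[|ψ⟩⟨ψ|]‖₁ ≤ 1 − 1/d, with equality when |ψ⟩ is unbiased with respect to the measurement basis (i.e., all pᵢ = 1/d). -/

import Mathlib

open Matrix Kronecker BigOperators
open scoped ComplexOrder

/-- Trace norm (Schatten 1-norm): `Tr √(XᴴX)`. -/
noncomputable def traceNorm {m n : Type*} [Fintype m] [Fintype n] [DecidableEq n]
    (X : Matrix m n ℂ) : ℝ :=
  (((Matrix.posSemidef_conjTranspose_mul_self X).1.eigenvectorUnitary.1 *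
      Matrix.diagonal (((↑) : ℝ → ℂ) ∘ Real.sqrt ∘ (Matrix.posSemidef_conjTranspose_mul_self X).1.eigenvalues) *
      (star (Matrix.posSemidef_conjTranspose_mul_self X).1.eigenvectorUnitary : Matrix n n ℂ)).trace).re


/-- Complete projective measurement in the orthonormal basis `e`. -/
noncomputable def projMeas {d : ℕ} (e : Fin d → Fin d → ℂ)
    (τ : Matrix (Fin d) (Fin d) ℂ) : Matrix (Fin d) (Fin d) ℂ :=
  ∑ i, Matrix.vecMulVec (e i) (star (e i)) * τ * Matrix.vecMulVec (e i) (star (e i))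

/-!
Write `ρ = |ψ⟩⟨ψ|` and `X = ρ - Π[ρ]`. `X` is Hermitian and traceless, so `‖X‖₁` is twice the sum
of its positive eigenvalues. Since `Π[ρ] ≥ 0`, the quadratic form of `X` is nonpositive on `ψ^⊥`,
so `X` has at most one positive eigenvalue, and every eigenvalue is bounded by the values of
`⟨v|X|v⟩ = |⟨v|ψ⟩|² - ∑ pᵢ |⟨eᵢ|v⟩|²` at unit vectors `v`. Expanding `⟨v|ψ⟩ = ∑ zᵢ` in the basis,
Cauchy–Schwarz gives `t := ∑ |zᵢ| ≤ 1` and `∑ |zᵢ|² ≥ t² / d`, so the form is at most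
`t² (1 - 1/d) ≤ 1 - 1/d`.
In the unbiased case `Π[ρ] = 1/d`, and `|ρ - 1/d| = (1/d)(1 - ρ) + (1 - 1/d) ρ` has trace
`2 (1 - 1/d)`.
-/

open scoped MatrixOrder

theorem sum_abs_le_two_mul_of_sum_eq_zero {ι : Type*} [Fintype ι] {f : ι → ℝ} {c : ℝ}
    (hsum : ∑ i, f i = 0) (hc : 0 ≤ c) (hle : ∀ i, f i ≤ c)
    (huniq : ∀ i j, 0 < f i → 0 < f j → i = j) : ∑ i, |f i| ≤ 2 * c := by
  have habs : ∑ i, |f i| = 2 * ∑ i, (f i)⁺ := by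
    have h : ∀ i, |f i| = 2 * (f i)⁺ - f i := fun i => by
      linarith [posPart_add_negPart (f i), posPart_sub_negPart (f i)]
    simp only [h, Finset.sum_sub_distrib, hsum, ← Finset.mul_sum, sub_zero]
  rw [habs]
  gcongr
  by_cases hpos : ∃ i, 0 < f i
  · obtain ⟨i, hi⟩ := hpos
    rw [Finset.sum_eq_single i (fun j _ hji => posPart_eq_zero.mpr
      (not_lt.mp fun hj => hji (huniq j i hj hi))) (by simp), posPart_eq_self.mpr hi.le]
    exact hle i
  · simp only [not_exists, not_lt] at hpos
    simpa [posPart_eq_zero.mpr (hpos _)] using hc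

theorem norm_sum_mul_sq_sub_sum_le {ι 𝕜 : Type*} [Fintype ι] [NormedField 𝕜] {a b : ι → 𝕜}
    (ha : ∑ i, ‖a i‖ ^ 2 = 1) (hb : ∑ i, ‖b i‖ ^ 2 = 1) :
    ‖∑ i, a i * b i‖ ^ 2 - ∑ i, ‖a i‖ ^ 2 * ‖b i‖ ^ 2 ≤ 1 - 1 / Fintype.card ι := by
  set s : ι → ℝ := fun i => ‖a i‖ * ‖b i‖
  set t := ∑ i, s i
  have ht1 : t ^ 2 ≤ 1 := by
    simpa [ha, hb, s, t, mul_pow] using Finset.sum_mul_sq_le_sq_mul_sq Finset.univ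
      (fun i => ‖a i‖) (fun i => ‖b i‖)
  have hnorm : ‖∑ i, a i * b i‖ ≤ t := (norm_sum_le _ _).trans_eq (by simp [t, s])
  have hcard : t ^ 2 ≤ Fintype.card ι * ∑ i, s i ^ 2 := sq_sum_le_card_mul_sum_sq
  have hι : (1 : ℝ) ≤ Fintype.card ι := by
    obtain ⟨i, -, -⟩ := Finset.exists_ne_zero_of_sum_ne_zero (ha ▸ one_ne_zero)
    exact_mod_cast Fintype.card_pos_iff.2 ⟨i⟩
  have hdiv : t ^ 2 * (1 / Fintype.card ι) ≤ ∑ i, s i ^ 2 := by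
    rw [mul_one_div, div_le_iff₀ (by linarith)]
    linarith
  have hc : 0 ≤ 1 - 1 / (Fintype.card ι : ℝ) := sub_nonneg.2 ((div_le_one (by linarith)).2 hι)
  calc ‖∑ i, a i * b i‖ ^ 2 - ∑ i, ‖a i‖ ^ 2 * ‖b i‖ ^ 2
      ≤ t ^ 2 - t ^ 2 * (1 / Fintype.card ι) := by
        simp only [s, mul_pow] at hdiv
        gcongr
    _ = t ^ 2 * (1 - 1 / Fintype.card ι) := by ring
    _ ≤ 1 - 1 / Fintype.card ι := mul_le_of_le_one_left hc ht1

namespace Matrix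

section Spectral

variable {𝕜 n : Type*} [RCLike 𝕜] [Fintype n] [DecidableEq n] {A : Matrix n n 𝕜}

theorem IsHermitian.star_eigenvectorBasis_dotProduct (hA : A.IsHermitian) (i j : n) :
    star ⇑(hA.eigenvectorBasis i) ⬝ᵥ ⇑(hA.eigenvectorBasis j) = if i = j then 1 else 0 := by
  rw [dotProduct_comm, ← EuclideanSpace.inner_eq_star_dotProduct]
  exact orthonormal_iff_ite.mp hA.eigenvectorBasis.orthonormal i j

theorem IsHermitian.eigenvalues_le (hA : A.IsHermitian) {c : ℝ}
    (h : ∀ v, star v ⬝ᵥ v = 1 → RCLike.re (star v ⬝ᵥ (A *ᵥ v)) ≤ c) (i : n) :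
    hA.eigenvalues i ≤ c := by
  rw [hA.eigenvalues_eq]
  exact h _ (by simpa using hA.star_eigenvectorBasis_dotProduct i i)

theorem IsHermitian.eq_of_eigenvalues_pos (hA : A.IsHermitian) (w : n → 𝕜)
    (h : ∀ u, star w ⬝ᵥ u = 0 → RCLike.re (star u ⬝ᵥ (A *ᵥ u)) ≤ 0) {i j : n}
    (hi : 0 < hA.eigenvalues i) (hj : 0 < hA.eigenvalues j) : i = j := by
  by_contra hij
  set vi := ⇑(hA.eigenvectorBasis i)
  set vj := ⇑(hA.eigenvectorBasis j)
  set α := star w ⬝ᵥ vi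
  set β := star w ⬝ᵥ vj
  by_cases hβ : β = 0
  · have hj' := h vj hβ
    rw [← hA.eigenvalues_eq] at hj'
    linarith
  · -- a nonzero combination of the two eigenvectors that is orthogonal to `w`
    set u := β • vi - α • vj
    have hu : star w ⬝ᵥ u = 0 := by
      simp only [u, dotProduct_sub, dotProduct_smul, smul_eq_mul, α, β]
      ring
    have hAu : RCLike.re (star u ⬝ᵥ (A *ᵥ u)) =
        ‖β‖ ^ 2 * hA.eigenvalues i + ‖α‖ ^ 2 * hA.eigenvalues j := by
      simp only [u, vi, vj, mulVec_sub, mulVec_smul, hA.mulVec_eigenvectorBasis, star_sub,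
        star_smul, sub_dotProduct, dotProduct_sub, smul_dotProduct, dotProduct_smul,
        hA.star_eigenvectorBasis_dotProduct, ↓reduceIte, if_neg hij, if_neg (Ne.symm hij)]
      simp only [smul_eq_mul, RCLike.real_smul_eq_coe_mul, mul_one, mul_zero, sub_zero, zero_sub,
        mul_neg, sub_neg_eq_add, RCLike.star_def, mul_left_comm β, mul_left_comm α,
        RCLike.mul_conj]
      norm_cast
      ring
    have hβ₀ : 0 < ‖β‖ := norm_pos_iff.mpr hβ
    nlinarith [h u hu, mul_pos (pow_pos hβ₀ 2) hi, mul_nonneg (sq_nonneg ‖α‖) hj.le]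

end Spectral

section TraceNorm

variable {m n : Type*} [Fintype m] [Fintype n] [DecidableEq n]

theorem traceNorm_eq_re_trace_sqrt (X : Matrix m n ℂ) :
    traceNorm X = (CFC.sqrt (Xᴴ * X)).trace.re := by
  have hA := posSemidef_conjTranspose_mul_self X
  rw [traceNorm, CFC.sqrt_eq_cfc, cfc_nnreal_eq_real _ _ hA.nonneg, hA.1.cfc_eq,
    IsHermitian.cfc, Unitary.conjStarAlgAut_apply]
  congr 5
  funext i
  simp [Real.coe_sqrt, Real.coe_toNNReal', hA.eigenvalues_nonneg i]

theorem traceNorm_eq_re_trace_of_sq_eq {X Y : Matrix n n ℂ} (hY : Y.PosSemidef)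
    (h : Y ^ 2 = Xᴴ * X) : traceNorm X = Y.trace.re := by
  rw [traceNorm_eq_re_trace_sqrt, ((CFC.sqrt_eq_iff _ _ (posSemidef_conjTranspose_mul_self X).nonneg
    hY.nonneg).2 (by rw [← sq, h]))]

theorem IsHermitian.trace_cfc {𝕜 : Type*} [RCLike 𝕜] {A : Matrix n n 𝕜} (hA : A.IsHermitian)
    (f : ℝ → ℝ) : (cfc f A).trace = ∑ i, (f (hA.eigenvalues i) : 𝕜) := by
  rw [hA.cfc_eq, IsHermitian.cfc, Unitary.conjStarAlgAut_apply, trace_mul_cycle,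
    Unitary.coe_star_mul_self, one_mul, trace_diagonal]
  rfl

theorem IsHermitian.traceNorm_eq_sum_abs_eigenvalues {X : Matrix n n ℂ} (hX : X.IsHermitian) :
    traceNorm X = ∑ i, |hX.eigenvalues i| := by
  have habs : CFC.sqrt (Xᴴ * X) = cfc (‖·‖) X := CFC.abs_eq_cfc_norm X hX.isSelfAdjoint
  rw [traceNorm_eq_re_trace_sqrt, habs, hX.trace_cfc]
  simp

theorem IsHermitian.traceNorm_le_two_mul {X : Matrix n n ℂ} (hX : X.IsHermitian)
    (htr : X.trace = 0) (w : n → ℂ)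
    (hw : ∀ u, star w ⬝ᵥ u = 0 → (star u ⬝ᵥ (X *ᵥ u)).re ≤ 0) {c : ℝ} (hc : 0 ≤ c)
    (hle : ∀ v, star v ⬝ᵥ v = 1 → (star v ⬝ᵥ (X *ᵥ v)).re ≤ c) :
    traceNorm X ≤ 2 * c := by
  rw [hX.traceNorm_eq_sum_abs_eigenvalues]
  refine sum_abs_le_two_mul_of_sum_eq_zero ?_ hc (hX.eigenvalues_le hle)
    fun i j => hX.eq_of_eigenvalues_pos w hw
  simpa [htr] using congrArg Complex.re hX.trace_eq_sum_eigenvalues.symm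

theorem IsStarProjection.traceNorm_sub_smul_one {P : Matrix n n ℂ} (hP : IsStarProjection P)
    {c : ℝ} (hc₀ : 0 ≤ c) (hc₁ : c ≤ 1) :
    traceNorm (P - c • 1) = c * (Fintype.card n - P.trace.re) + (1 - c) * P.trace.re := by
  set Y := c • (1 - P) + (1 - c) • P
  have hY : Y.PosSemidef :=
    (hP.one_sub_nonneg.posSemidef.smul hc₀).add (hP.nonneg.posSemidef.smul (sub_nonneg.2 hc₁))
  have hP2 : P * P = P := hP.isIdempotentElem.eq
  have hPh : Pᴴ = P := hP.isSelfAdjoint.star_eq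
  have hsq : Y ^ 2 = (P - c • 1)ᴴ * (P - c • 1) := by
    simp only [Y, sq, conjTranspose_sub, conjTranspose_smul, conjTranspose_one, hPh, star_trivial,
      add_mul, mul_add, sub_mul, mul_sub, smul_mul_assoc, mul_smul_comm, one_mul, mul_one, hP2]
    module
  rw [traceNorm_eq_re_trace_of_sq_eq hY hsq]
  simp [Y, trace_sub]

end TraceNorm

section VecMulVec

variable {n : Type*} [Fintype n]

theorem star_dotProduct_self_eq_sum_norm_sq (v : n → ℂ) :
    star v ⬝ᵥ v = ((∑ i, ‖v i‖ ^ 2 : ℝ) : ℂ) := by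
  push_cast
  exact Finset.sum_congr rfl fun i _ => Complex.conj_mul' (v i)

theorem norm_star_dotProduct_comm (v w : n → ℂ) : ‖star v ⬝ᵥ w‖ = ‖star w ⬝ᵥ v‖ := by
  rw [star_dotProduct, norm_star]

theorem star_dotProduct_vecMulVec_mulVec (w v : n → ℂ) :
    star v ⬝ᵥ (vecMulVec w (star w) *ᵥ v) = ((‖star v ⬝ᵥ w‖ ^ 2 : ℝ) : ℂ) := by
  rw [vecMulVec_mulVec, dotProduct_smul, op_smul_eq_mul, star_dotProduct w v]
  push_cast
  exact Complex.mul_conj' _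

theorem isStarProjection_vecMulVec_star {w : n → ℂ} (hw : star w ⬝ᵥ w = 1) :
    IsStarProjection (vecMulVec w (star w)) where
  isIdempotentElem := by rw [IsIdempotentElem, vecMulVec_mul_vecMulVec, hw, one_smul]
  isSelfAdjoint := (posSemidef_vecMulVec_self_star w).isHermitian

theorem vecMulVec_star_mul_mul_vecMulVec_star (u : n → ℂ)
    (τ : Matrix n n ℂ) :
    vecMulVec u (star u) * τ * vecMulVec u (star u) =
      (star u ⬝ᵥ (τ *ᵥ u)) • vecMulVec u (star u) := by
  rw [vecMulVec_mul, vecMulVec_mul_vecMulVec, ← dotProduct_mulVec]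
  ext i j
  simp [vecMulVec_apply, mul_left_comm]

end VecMulVec

section OrthonormalFamily

variable {n : Type*} [Fintype n] [DecidableEq n] {e : n → n → ℂ}

theorem sum_vecMulVec_star_eq_one (he : ∀ i j, star (e i) ⬝ᵥ e j = if i = j then 1 else 0) :
    ∑ i, vecMulVec (e i) (star (e i)) = 1 := by
  set M : Matrix n n ℂ := (of e)ᵀ
  have hM : Mᴴ * M = 1 := by
    ext i j
    simpa [M, mul_apply, one_apply, dotProduct] using he i j
  ext j k
  simpa [M, mul_apply, vecMulVec_apply, Matrix.sum_apply] using congr($(mul_eq_one_comm.mp hM) j k)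

theorem star_dotProduct_eq_sum (he : ∀ i j, star (e i) ⬝ᵥ e j = if i = j then 1 else 0)
    (v w : n → ℂ) : star v ⬝ᵥ w = ∑ i, (star v ⬝ᵥ e i) * (star (e i) ⬝ᵥ w) := by
  conv_lhs => rw [← one_mulVec w, ← sum_vecMulVec_star_eq_one he, sum_mulVec, dotProduct_sum]
  simp only [vecMulVec_mulVec, dotProduct_smul, op_smul_eq_mul]

theorem sum_norm_sq_star_dotProduct (he : ∀ i j, star (e i) ⬝ᵥ e j = if i = j then 1 else 0)
    (v : n → ℂ) : ((∑ i, ‖star (e i) ⬝ᵥ v‖ ^ 2 : ℝ) : ℂ) = star v ⬝ᵥ v := by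
  rw [star_dotProduct_eq_sum he v v]
  push_cast
  refine Finset.sum_congr rfl fun i _ => ?_
  rw [star_dotProduct v (e i)]
  exact (Complex.conj_mul' _).symm

end OrthonormalFamily

section ProjectiveMeasurement

variable {d : ℕ} {e : Fin d → Fin d → ℂ}

theorem projMeas_eq_sum_smul (τ : Matrix (Fin d) (Fin d) ℂ) :
    projMeas e τ = ∑ i, (star (e i) ⬝ᵥ (τ *ᵥ e i)) • vecMulVec (e i) (star (e i)) :=
  Finset.sum_congr rfl fun i _ => vecMulVec_star_mul_mul_vecMulVec_star (e i) τ

theorem IsHermitian.projMeas {τ : Matrix (Fin d) (Fin d) ℂ} (hτ : τ.IsHermitian) :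
    (projMeas e τ).IsHermitian := by
  refine isSelfAdjoint_sum _ fun i _ => ?_
  simpa using (isHermitian_conjTranspose_mul_mul (vecMulVec (e i) (star (e i))) hτ).isSelfAdjoint

theorem trace_projMeas (he : ∀ i j, star (e i) ⬝ᵥ e j = if i = j then 1 else 0)
    (τ : Matrix (Fin d) (Fin d) ℂ) : (projMeas e τ).trace = τ.trace := by
  calc (projMeas e τ).trace = ∑ i, star (e i) ⬝ᵥ (τ *ᵥ e i) := by
        simp [projMeas_eq_sum_smul, trace_sum, dotProduct_comm (e _), he]
    _ = (τ * ∑ i, vecMulVec (e i) (star (e i))).trace := by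
        simp [Matrix.mul_sum, trace_sum, mul_vecMulVec, dotProduct_comm]
    _ = τ.trace := by rw [sum_vecMulVec_star_eq_one he, Matrix.mul_one]

theorem re_star_dotProduct_sub_projMeas_mulVec (ψ v : Fin d → ℂ) :
    (star v ⬝ᵥ ((vecMulVec ψ (star ψ) - projMeas e (vecMulVec ψ (star ψ))) *ᵥ v)).re =
      ‖star v ⬝ᵥ ψ‖ ^ 2 - ∑ i, ‖star (e i) ⬝ᵥ ψ‖ ^ 2 * ‖star v ⬝ᵥ e i‖ ^ 2 := by
  simp only [projMeas_eq_sum_smul, sub_mulVec, sum_mulVec, smul_mulVec, dotProduct_sub,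
    dotProduct_sum, dotProduct_smul, star_dotProduct_vecMulVec_mulVec, smul_eq_mul,
    ← Complex.ofReal_mul, ← Complex.ofReal_sum, ← Complex.ofReal_sub, Complex.ofReal_re]

theorem re_star_dotProduct_sub_projMeas_mulVec_nonpos {ψ u : Fin d → ℂ}
    (hu : star ψ ⬝ᵥ u = 0) :
    (star u ⬝ᵥ ((vecMulVec ψ (star ψ) - projMeas e (vecMulVec ψ (star ψ))) *ᵥ u)).re ≤ 0 := by
  rw [re_star_dotProduct_sub_projMeas_mulVec, star_dotProduct u ψ, hu, star_zero, norm_zero,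
    zero_pow two_ne_zero, zero_sub, neg_nonpos]
  positivity

theorem re_star_dotProduct_sub_projMeas_mulVec_le
    (he : ∀ i j, star (e i) ⬝ᵥ e j = if i = j then 1 else 0) {ψ v : Fin d → ℂ}
    (hψ : star ψ ⬝ᵥ ψ = 1) (hv : star v ⬝ᵥ v = 1) :
    (star v ⬝ᵥ ((vecMulVec ψ (star ψ) - projMeas e (vecMulVec ψ (star ψ))) *ᵥ v)).re ≤
      1 - 1 / d := by
  have ha : ∑ i, ‖star v ⬝ᵥ e i‖ ^ 2 = 1 := by
    simp_rw [norm_star_dotProduct_comm v]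
    exact_mod_cast (sum_norm_sq_star_dotProduct he v).trans hv
  have hb : ∑ i, ‖star (e i) ⬝ᵥ ψ‖ ^ 2 = 1 := by
    exact_mod_cast (sum_norm_sq_star_dotProduct he ψ).trans hψ
  rw [re_star_dotProduct_sub_projMeas_mulVec, star_dotProduct_eq_sum he v ψ]
  convert norm_sum_mul_sq_sub_sum_le ha hb using 3
  · exact mul_comm _ _
  · rw [Fintype.card_fin]

theorem traceNorm_sub_projMeas_le (he : ∀ i j, star (e i) ⬝ᵥ e j = if i = j then 1 else 0)
    {ψ : Fin d → ℂ} (hψ : star ψ ⬝ᵥ ψ = 1) :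
    traceNorm (vecMulVec ψ (star ψ) - projMeas e (vecMulVec ψ (star ψ))) ≤ 2 * (1 - 1 / d) := by
  have hρ : (vecMulVec ψ (star ψ)).IsHermitian := (posSemidef_vecMulVec_self_star ψ).isHermitian
  refine (hρ.sub (hρ.projMeas (e := e))).traceNorm_le_two_mul ?_ ψ
    (fun u => re_star_dotProduct_sub_projMeas_mulVec_nonpos) ?_
    (fun v => re_star_dotProduct_sub_projMeas_mulVec_le he hψ)
  · rw [trace_sub, trace_projMeas he, sub_self]
  · exact Nat.one_sub_one_div_cast_nonneg d

theorem projMeas_vecMulVec_eq_smul_one (he : ∀ i j, star (e i) ⬝ᵥ e j = if i = j then 1 else 0)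
    {ψ : Fin d → ℂ} (hunbiased : ∀ i, ‖star (e i) ⬝ᵥ ψ‖ ^ 2 = 1 / d) :
    projMeas e (vecMulVec ψ (star ψ)) = (1 / d : ℝ) • 1 := by
  simp_rw [projMeas_eq_sum_smul, star_dotProduct_vecMulVec_mulVec, hunbiased, Complex.coe_smul,
    ← Finset.smul_sum, sum_vecMulVec_star_eq_one he]

theorem traceNorm_sub_projMeas_of_unbiased (hd : 0 < d)
    (he : ∀ i j, star (e i) ⬝ᵥ e j = if i = j then 1 else 0) {ψ : Fin d → ℂ}
    (hψ : star ψ ⬝ᵥ ψ = 1) (hunbiased : ∀ i, ‖star (e i) ⬝ᵥ ψ‖ ^ 2 = 1 / d) :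
    traceNorm (vecMulVec ψ (star ψ) - projMeas e (vecMulVec ψ (star ψ))) = 2 * (1 - 1 / d) := by
  have hd₀ : (d : ℝ) ≠ 0 := by positivity
  rw [projMeas_vecMulVec_eq_smul_one he hunbiased,
    (isStarProjection_vecMulVec_star hψ).traceNorm_sub_smul_one (by positivity)
      (one_div (d : ℝ) ▸ Nat.cast_inv_le_one d),
    trace_vecMulVec, dotProduct_comm, hψ, Fintype.card_fin, Complex.one_re]
  field_simp
  ring

end ProjectiveMeasurement

end Matrix

/-- for any pure state `|ψ⟩ ∈ ℂᵈ` and any complete projective measurement,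
`½‖|ψ⟩⟨ψ| − Π[|ψ⟩⟨ψ|]‖₁ ≤ 1 − 1/d`, with equality when all `pᵢ = |⟨eᵢ|ψ⟩|² = 1/d`. -/
theorem disturbance_pure_le {d : ℕ} (hd : 0 < d)
    (ψ : Fin d → ℂ) (hψ : ∑ i, ‖ψ i‖^2 = 1)
    (e : Fin d → Fin d → ℂ)
    (he : ∀ i j, star (e i) ⬝ᵥ e j = if i = j then 1 else 0) :
    (1 / 2) * traceNorm (Matrix.vecMulVec ψ (star ψ) - projMeas e (Matrix.vecMulVec ψ (star ψ)))
        ≤ 1 - 1 / d ∧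
    ((∀ i, ‖star (e i) ⬝ᵥ ψ‖^2 = 1 / d) →
      (1 / 2) * traceNorm (Matrix.vecMulVec ψ (star ψ) - projMeas e (Matrix.vecMulVec ψ (star ψ)))
        = 1 - 1 / d) := by
  have hψ₁ : star ψ ⬝ᵥ ψ = 1 := by rw [star_dotProduct_self_eq_sum_norm_sq, hψ, Complex.ofReal_one]
  refine ⟨?_, fun hunbiased => ?_⟩
  · linarith [traceNorm_sub_projMeas_le he hψ₁]
  · rw [traceNorm_sub_projMeas_of_unbiased hd he hψ₁ hunbiased]
    ring
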